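/- arXiv:1907.08634 — 4 statements merged into one kernel-verified Lean document; each statement's English description precedes it below -/
import Mathlib

section
/- Let E be a skew-symmetric n×n integer matrix (exchange matrix of a quiver with no loops or 2-cycles) and w ∈ ℤⁿ with E·w = 0 (the quiver is balanced). Fix a vertex m and define the mutated matrix E' by E'(i,j) = −E(i,j) if i = m or j = m, and E'(i,j) = E(i,j) + sign(E(i,m))·max(E(i,m)·E(m,j), 0) otherwise, and define w' by w'(m) = D(m) − w(m) where D(m) = ∑_{j : E(m,j)>0} E(m,j)·w(j), and w'(i) = w(i) for i ≠ m. Then E'·w' = 0, i.e. the mutated quiver is balanced. -/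
private lemma two_max_eq (x : ℤ) : 2 * max x 0 = x + |x| := by
  rcases le_total x 0 with h | h
  · rw [max_eq_right h, abs_of_nonpos h]; ring
  · rw [max_eq_left h, abs_of_nonneg h]; ring

private lemma sign_max_eq (a b : ℤ) :
    2 * (Int.sign a * max (a * b) 0) = |a| * b + a * |b| := by
  rcases lt_trichotomy a 0 with h | h | h
  · rw [Int.sign_eq_neg_one_of_neg h, abs_of_neg h]
    rcases le_total b 0 with hb | hb
    · rw [abs_of_nonpos hb, max_eq_left (by nlinarith)]; ring
    · rw [abs_of_nonneg hb, max_eq_right (by nlinarith)]; ring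
  · simp [h]
  · rw [Int.sign_eq_one_of_pos h, abs_of_pos h]
    rcases le_total b 0 with hb | hb
    · rw [abs_of_nonpos hb, max_eq_right (by nlinarith)]; ring
    · rw [abs_of_nonneg hb, max_eq_left (by nlinarith)]; ring

/-- Fomin–Zelevinsky mutation at a vertex `m` of a balanced quiver
(skew-symmetric exchange matrix `E` with `E · w = 0`) produces a balanced quiver:
`E' · w' = 0`, where `w' m = D(m) - w m` with `D(m)` the diameter of `m`. -/
theorem mutation_preserves_balancing (n : ℕ) (E : Matrix (Fin n) (Fin n) ℤ)
    (w : Fin n → ℤ) (m : Fin n)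
    (hskew : ∀ i j, E j i = -E i j)
    (hbal : E.mulVec w = 0)
    (E' : Matrix (Fin n) (Fin n) ℤ)
    (hE' : ∀ i j, E' i j =
      if i = m ∨ j = m then -E i j
      else E i j + Int.sign (E i m) * max (E i m * E m j) 0)
    (D : ℤ)
    (hD : D = ∑ j ∈ Finset.univ.filter (fun j => 0 < E m j), E m j * w j)
    (w' : Fin n → ℤ)
    (hw' : ∀ i, w' i = if i = m then D - w m else w i) :
    E'.mulVec w' = 0 := by
  have hEmm : E m m = 0 := by have := hskew m m; omega
  have hbal' : ∀ i, ∑ j, E i j * w j = 0 := by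
    intro i
    have := congrFun hbal i
    simpa [Matrix.mulVec, dotProduct] using this
  have hrow : ∑ j ∈ Finset.univ.erase m, E m j * w j = 0 := by
    have h : ∑ j ∈ Finset.univ.erase m, E m j * w j + E m m * w m
        = ∑ j, E m j * w j :=
      Finset.sum_erase_add Finset.univ _ (Finset.mem_univ m)
    rw [hbal' m, hEmm] at h
    linarith
  have hDmax : D = ∑ j, max (E m j) 0 * w j := by
    rw [hD, Finset.sum_filter]
    refine Finset.sum_congr rfl (fun j _ => ?_)
    rcases lt_or_ge 0 (E m j) with h | h
    · rw [if_pos h, max_eq_left h.le]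
    · rw [if_neg (not_lt.mpr h), max_eq_right h]; ring
  have habs : ∑ j ∈ Finset.univ.erase m, |E m j| * w j = 2 * D := by
    have h1 : 2 * D = ∑ j, (E m j + |E m j|) * w j := by
      rw [hDmax, Finset.mul_sum]
      refine Finset.sum_congr rfl (fun j _ => ?_)
      linear_combination w j * two_max_eq (E m j)
    have h2 : ∑ j, (E m j + |E m j|) * w j
        = ∑ j, E m j * w j + ∑ j, |E m j| * w j := by
      rw [← Finset.sum_add_distrib]
      exact Finset.sum_congr rfl (fun j _ => by ring)
    have h3 : ∑ j ∈ Finset.univ.erase m, |E m j| * w j + |E m m| * w m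
        = ∑ j, |E m j| * w j :=
      Finset.sum_erase_add Finset.univ _ (Finset.mem_univ m)
    rw [h2, hbal' m, zero_add] at h1
    rw [hEmm] at h3
    simp only [abs_zero, zero_mul, add_zero] at h3
    linarith
  funext i
  show E'.mulVec w' i = (0 : Fin n → ℤ) i
  have hmv : E'.mulVec w' i = ∑ j, E' i j * w' j := by
    simp [Matrix.mulVec, dotProduct]
  rw [hmv]
  show ∑ j, E' i j * w' j = 0
  have hsplit : ∑ j ∈ Finset.univ.erase m, E' i j * w' j + E' i m * w' m
      = ∑ j, E' i j * w' j :=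
    Finset.sum_erase_add Finset.univ _ (Finset.mem_univ m)
  by_cases hi : i = m
  · subst hi
    have hdiag : E' i i * w' i = 0 := by
      rw [hE']; simp [hEmm]
    have hoff : ∀ j ∈ Finset.univ.erase i, E' i j * w' j = -(E i j * w j) := by
      intro j hj
      have hjm : j ≠ i := Finset.ne_of_mem_erase hj
      rw [hE', hw']
      simp [hjm]
    have h0 : ∑ j ∈ Finset.univ.erase i, E' i j * w' j = 0 := by
      rw [Finset.sum_congr rfl hoff, Finset.sum_neg_distrib, hrow, neg_zero]
    rw [← hsplit, h0, hdiag]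
    ring
  · have h1 : ∑ j ∈ Finset.univ.erase m, E i j * w j = -(E i m * w m) := by
      have h : ∑ j ∈ Finset.univ.erase m, E i j * w j + E i m * w m
          = ∑ j, E i j * w j :=
        Finset.sum_erase_add Finset.univ _ (Finset.mem_univ m)
      rw [hbal' i] at h
      linarith
    have hdiag : E' i m * w' m = -(E i m) * (D - w m) := by
      rw [hE', hw']; simp
    have key : ∀ j ∈ Finset.univ.erase m, 2 * (E' i j * w' j)
        = 2 * (E i j * w j) + (|E i m| * (E m j * w j) + E i m * (|E m j| * w j)) := by
      intro j hj
      have hjm : j ≠ m := Finset.ne_of_mem_erase hj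
      rw [hE', hw', if_neg (by tauto), if_neg hjm]
      linear_combination w j * sign_max_eq (E i m) (E m j)
    have hsum2 : 2 * ∑ j ∈ Finset.univ.erase m, E' i j * w' j
        = 2 * ∑ j ∈ Finset.univ.erase m, E i j * w j
          + (|E i m| * ∑ j ∈ Finset.univ.erase m, E m j * w j
            + E i m * ∑ j ∈ Finset.univ.erase m, |E m j| * w j) := by
      rw [Finset.mul_sum, Finset.sum_congr rfl key, Finset.sum_add_distrib,
        Finset.sum_add_distrib, ← Finset.mul_sum, ← Finset.mul_sum, ← Finset.mul_sum]
    rw [h1, hrow, habs] at hsum2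
    have h2 : 2 * ∑ j, E' i j * w' j = 0 := by
      rw [← hsplit]
      linear_combination hsum2 + 2 * hdiag
    linarith
end

section
/- Let E be a skew-symmetric n×n integer matrix with mutation E' at a vertex m given by the Fomin–Zelevinsky rule E'(i,j) = −E(i,j) if i = m or j = m, else E'(i,j) = E(i,j) + sign(E(i,m))·max(E(i,m)·E(m,j),0). Then gcd over all entries of E equals gcd over all entries of E'. -/
/-- If `B` is obtained from `A` by the FZ mutation formula at `m`, then the gcd of
entries of `A` divides the gcd of entries of `B`. -/
lemma gcd_dvd_gcd_of_mutation (n : ℕ) (m : Fin n)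
    (A B : Matrix (Fin n) (Fin n) ℤ)
    (hB : ∀ i j, B i j =
      if i = m ∨ j = m then -A i j
      else A i j + Int.sign (A i m) * max (A i m * A m j) 0) :
    (Finset.univ : Finset (Fin n × Fin n)).gcd (fun p => A p.1 p.2) ∣
      (Finset.univ : Finset (Fin n × Fin n)).gcd (fun p => B p.1 p.2) := by
  apply Finset.dvd_gcd
  intro p _
  have hA : ∀ i j, (Finset.univ : Finset (Fin n × Fin n)).gcd (fun p => A p.1 p.2) ∣ A i j :=
    fun i j => Finset.gcd_dvd (Finset.mem_univ ((i, j) : Fin n × Fin n))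
  rw [hB]
  split
  · exact (hA p.1 p.2).neg_right
  · refine dvd_add (hA p.1 p.2) ?_
    have h1 : (Finset.univ : Finset (Fin n × Fin n)).gcd (fun p => A p.1 p.2) ∣
        A p.1 m * A m p.2 := (hA p.1 m).mul_right _
    have hmax : (Finset.univ : Finset (Fin n × Fin n)).gcd (fun p => A p.1 p.2) ∣
        max (A p.1 m * A m p.2) 0 := by
      rcases max_choice (A p.1 m * A m p.2) 0 with h | h <;> rw [h]
      · exact h1
      · exact dvd_zero _
    exact hmax.mul_left _

/-- The gcd of the entries of a skew-symmetric exchange matrix is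
invariant under Fomin–Zelevinsky mutation at any vertex `m`. -/
theorem gcd_entries_mutation_invariant (n : ℕ) (E : Matrix (Fin n) (Fin n) ℤ)
    (m : Fin n)
    (hskew : ∀ i j, E j i = -E i j)
    (E' : Matrix (Fin n) (Fin n) ℤ)
    (hE' : ∀ i j, E' i j =
      if i = m ∨ j = m then -E i j
      else E i j + Int.sign (E i m) * max (E i m * E m j) 0) :
    (Finset.univ : Finset (Fin n × Fin n)).gcd (fun p => E p.1 p.2) =
      (Finset.univ : Finset (Fin n × Fin n)).gcd (fun p => E' p.1 p.2) := by
  have hE : ∀ i j, E i j =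
      if i = m ∨ j = m then -E' i j
      else E' i j + Int.sign (E' i m) * max (E' i m * E' m j) 0 := by
    intro i j
    by_cases h : i = m ∨ j = m
    · simp only [h, if_true]
      rw [hE' i j]; simp [h]
    · simp only [h, if_false]
      push_neg at h
      have him : E' i m = -E i m := by rw [hE' i m]; simp
      have hmj : E' m j = -E m j := by rw [hE' m j]; simp
      have hprod : E' i m * E' m j = E i m * E m j := by rw [him, hmj, neg_mul_neg]
      have hsign : Int.sign (E' i m) = -Int.sign (E i m) := by rw [him, Int.sign_neg]
      rw [hprod, hsign, hE' i j]
      simp only [h.1, h.2, or_self, if_false]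
      ring
  exact dvd_antisymm_of_normalize_eq
    Finset.normalize_gcd Finset.normalize_gcd
    (gcd_dvd_gcd_of_mutation n m E E' hE')
    (gcd_dvd_gcd_of_mutation n m E' E hE)
end

section
/- For a balanced quiver Q and vertex m, define the generalized mutation μᵏ_m for k ∈ ℤ: the exchange matrix transforms by E'(i,j) = −E(i,j) if i = m or j = m, else E'(i,j) = E(i,j) + k·sign(E(i,m))·max(E(i,m)·E(m,j),0), and the label of m becomes (k·D(m) − w, D(m) − ℓ) while other labels are unchanged. Then for all integers s, t: μᵗ_m ∘ μˢ_m = μ⁰_m ∘ μ^{s−t}_m, and μ⁰_m ∘ μ⁰_m = id. In particular each μᵏ_m is an involution. -/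
/-- The exchange-matrix part of the generalized mutation `μᵏ_m`. -/
def genMutE (n : ℕ) (k : ℤ) (m : Fin n) (E : Matrix (Fin n) (Fin n) ℤ) :
    Matrix (Fin n) (Fin n) ℤ :=
  fun i j =>
    if i = m ∨ j = m then -E i j
    else E i j + k * Int.sign (E i m) * max (E i m * E m j) 0

/-- The diameter of the vertex `m` of a balanced quiver with weights `w`. -/
def diam (n : ℕ) (E : Matrix (Fin n) (Fin n) ℤ) (w : Fin n → ℤ) (m : Fin n) : ℤ :=
  ∑ j, max (E m j) 0 * w j

/-- The generalized mutation `μᵏ_m` of a decorated quiver `(E, w, ℓ)`: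
the matrix mutates by `genMutE`, the label of `m` becomes
`(k·D(m) - w m, D(m) - ℓ m)`, all other labels are unchanged. -/
def genMut (n : ℕ) (k : ℤ) (m : Fin n) :
    Matrix (Fin n) (Fin n) ℤ × (Fin n → ℤ) × (Fin n → ℤ) →
      Matrix (Fin n) (Fin n) ℤ × (Fin n → ℤ) × (Fin n → ℤ) :=
  fun ⟨E, w, l⟩ =>
    ⟨genMutE n k m E,
     fun i => if i = m then k * diam n E w m - w i else w i,
     fun i => if i = m then diam n E w m - l i else l i⟩

section aux

lemma diam_genMutE_eq (n : ℕ) (k : ℤ) (m : Fin n) (E : Matrix (Fin n) (Fin n) ℤ)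
    (w w' : Fin n → ℤ) (hmm : E m m = 0) (hb : ∑ j, E m j * w j = 0)
    (hw : ∀ j, j ≠ m → w' j = w j) :
    diam n (genMutE n k m E) w' m = diam n E w m := by
  unfold diam genMutE
  simp only [true_or, if_true]
  have key : ∀ j : Fin n, max (-E m j) 0 * w' j
      = max (E m j) 0 * w j - E m j * w j := by
    intro j
    rcases eq_or_ne j m with rfl | h
    · simp [hmm]
    · rw [hw j h]
      have : max (-E m j) 0 = max (E m j) 0 - E m j := by omega
      rw [this]; ring
  calc (∑ j, max (-E m j) 0 * w' j)
      = ∑ j, (max (E m j) 0 * w j - E m j * w j) :=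
        Finset.sum_congr rfl fun j _ => key j
    _ = (∑ j, max (E m j) 0 * w j) - ∑ j, E m j * w j := by
        rw [Finset.sum_sub_distrib]
    _ = ∑ j, max (E m j) 0 * w j := by rw [hb]; ring

end aux

/-- For a balanced quiver `(E, w, ℓ)` (skew-symmetric `E`,
`E · w = 0`) and any vertex `m` and integers `s, t`:
`μᵗ_m ∘ μˢ_m = μ⁰_m ∘ μ^{s-t}_m` and `μ⁰_m ∘ μ⁰_m = id`; in particular each
`μᵏ_m` is an involution. -/
theorem genMut_group_law (n : ℕ) (E : Matrix (Fin n) (Fin n) ℤ)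
    (w l : Fin n → ℤ) (m : Fin n)
    (hskew : ∀ i j, E j i = -E i j)
    (hbal : E.mulVec w = 0) (s t : ℤ) :
    genMut n t m (genMut n s m (E, w, l)) =
      genMut n 0 m (genMut n (s - t) m (E, w, l)) ∧
    genMut n 0 m (genMut n 0 m (E, w, l)) = (E, w, l) ∧
    genMut n s m (genMut n s m (E, w, l)) = (E, w, l) := by
  have hmm : E m m = 0 := by have := hskew m m; omega
  have hb : ∑ j, E m j * w j = 0 := by
    have := congrFun hbal m
    simpa [Matrix.mulVec, dotProduct] using this
  set D := diam n E w m with hD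
  have hcomp : ∀ u v : ℤ, genMut n v m (genMut n u m (E, w, l)) =
      ⟨fun i j => if i = m ∨ j = m then E i j
          else E i j + (u - v) * Int.sign (E i m) * max (E i m * E m j) 0,
       fun i => if i = m then w i - (u - v) * D else w i,
       l⟩ := by
    intro u v
    have hd : diam n (genMutE n u m E)
        (fun i => if i = m then u * D - w i else w i) m = D :=
      diam_genMutE_eq n u m E w _ hmm hb (fun j hj => if_neg hj)
    show (⟨genMutE n v m (genMutE n u m E),
      fun i => if i = m then v * diam n (genMutE n u m E)
          (fun i => if i = m then u * D - w i else w i) m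
          - (if i = m then u * D - w i else w i)
        else (if i = m then u * D - w i else w i),
      fun i => if i = m then diam n (genMutE n u m E)
          (fun i => if i = m then u * D - w i else w i) m
          - (if i = m then D - l i else l i)
        else (if i = m then D - l i else l i)⟩ :
        Matrix (Fin n) (Fin n) ℤ × (Fin n → ℤ) × (Fin n → ℤ)) = _
    rw [hd]
    refine Prod.ext ?_ (Prod.ext ?_ ?_)
    · funext i j
      simp only [genMutE]
      by_cases h : i = m ∨ j = m
      · simp [h]
      · push_neg at h
        obtain ⟨hi, hj⟩ := h
        simp only [hi, hj, or_self, if_false, or_true, true_or, if_true,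
          eq_self_iff_true, false_or, or_false]
        rw [Int.sign_neg, neg_mul_neg]
        ring
    · funext i
      by_cases h : i = m <;> simp [h] <;> ring
    · funext i
      by_cases h : i = m <;> simp [h]
  have hF0 : (⟨fun i j => if i = m ∨ j = m then E i j
          else E i j + (0 : ℤ) * Int.sign (E i m) * max (E i m * E m j) 0,
       fun i => if i = m then w i - (0 : ℤ) * D else w i, l⟩ :
       Matrix (Fin n) (Fin n) ℤ × (Fin n → ℤ) × (Fin n → ℤ)) = (E, w, l) := by
    refine Prod.ext ?_ (Prod.ext ?_ rfl)
    · funext i j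
      by_cases h : i = m ∨ j = m <;> simp [h]
    · funext i
      by_cases h : i = m <;> simp [h]
  refine ⟨?_, ?_, ?_⟩
  · rw [hcomp s t, hcomp (s - t) 0, sub_zero]
  · rw [hcomp 0 0, sub_self]; exact hF0
  · rw [hcomp s s, sub_self]; exact hF0
end

section
/- In ℤ², let σ be the cone spanned by (0,1) and (r,−a) with r,a coprime positive integers, a < r. Then the width w and local index ℓ of σ satisfy w·ℓ = r. -/
/-- In `ℤ²`, let `σ` be the cone spanned by `(0,1)` and `(r,−a)`
with `r, a` coprime positive integers, `a < r`. Then the width `w` and local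
index `ℓ` of `σ` satisfy `w·ℓ = r`. -/
theorem width_mul_localIndex_eq_r (r a : ℤ) (hr : 0 < r) (ha : 0 < a)
    (har : a < r) (hcop : IsCoprime r a)
    (m : ℤ × ℤ) (hmprim : IsCoprime m.1 m.2)
    (l : ℤ)
    (hl1 : m.1 * 0 + m.2 * 1 = -l)
    (hl2 : m.1 * r + m.2 * (-a) = -l)
    (hlpos : 0 < l)
    (w : ℤ)
    (hw : w + 1 = Set.ncard {z : ℤ × ℤ |
        ((z.1 : ℚ), (z.2 : ℚ)) ∈ segment ℚ ((0 : ℚ), (1 : ℚ)) ((r : ℚ), (-a : ℚ))}) :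
    w * l = r := by
  set d : ℤ := (Int.gcd r (a + 1) : ℤ) with hdd
  have hgpos : 0 < Int.gcd r (a + 1) := by
    rw [Int.gcd_pos_iff]; left; exact hr.ne'
  have hd0 : 0 < d := by rw [hdd]; exact_mod_cast hgpos
  obtain ⟨r', hr'⟩ : d ∣ r := Int.gcd_dvd_left r (a + 1)
  obtain ⟨a', ha'⟩ : d ∣ (a + 1) := Int.gcd_dvd_right r (a + 1)
  have hr'pos : 0 < r' := by nlinarith
  have hre : r' = r / d := by
    rw [hr', Int.mul_ediv_cancel_left _ hd0.ne']
  have hae : a' = (a + 1) / d := by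
    rw [ha', Int.mul_ediv_cancel_left _ hd0.ne']
  have cop' : IsCoprime r' a' := by
    rw [Int.isCoprime_iff_gcd_eq_one, hre, hae, hdd]
    exact Int.gcd_div_gcd_div_gcd hgpos
  -- compute the set of lattice points
  have hset : {z : ℤ × ℤ |
        ((z.1 : ℚ), (z.2 : ℚ)) ∈ segment ℚ ((0 : ℚ), (1 : ℚ)) ((r : ℚ), (-a : ℚ))}
      = (fun k : ℤ => (k * r', 1 - k * a')) '' Set.Icc (0 : ℤ) d := by
    ext z
    simp only [Set.mem_setOf_eq, Set.mem_image, Set.mem_Icc, segment_eq_image,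
      Set.mem_image, Set.mem_Icc, Prod.ext_iff, Prod.smul_def, smul_eq_mul,
      Prod.fst_add, Prod.snd_add, Prod.fst_mul, Prod.snd_mul]
    constructor
    · rintro ⟨t, ⟨ht0, ht1⟩, h1, h2⟩
      have e1 : (z.1 : ℚ) = t * r := by linarith [h1]
      have e2 : (z.2 : ℚ) = 1 - t * (a + 1) := by push_cast at h2 ⊢; linarith [h2]
      -- key integer relation
      have E : (r : ℚ) * z.2 = r - z.1 * (a + 1) := by
        rw [e1, e2]; ring
      have EZ : r * z.2 = r - z.1 * (a + 1) := by exact_mod_cast E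
      have EZ' : r' * z.2 = r' - z.1 * a' := by
        have : d * (r' * z.2) = d * (r' - z.1 * a') := by
          rw [hr', ha'] at EZ; linarith [EZ]
        exact mul_left_cancel₀ hd0.ne' this
      have hdvd : r' ∣ z.1 := by
        refine cop'.dvd_of_dvd_mul_right ⟨1 - z.2, ?_⟩
        linarith [EZ']
      obtain ⟨k, hk⟩ := hdvd
      have hka : k * a' = 1 - z.2 := by
        have : r' * (k * a') = r' * (1 - z.2) := by rw [hk] at EZ'; ring_nf; linarith [EZ']
        exact mul_left_cancel₀ hr'pos.ne' this
      have hz1nn : (0:ℚ) ≤ z.1 := by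
        rw [e1]; positivity
      have hz1le : (z.1 : ℚ) ≤ r := by
        rw [e1]
        calc t * r ≤ 1 * r := by
              apply mul_le_mul_of_nonneg_right ht1 (by positivity)
          _ = r := one_mul _
      have hz1nnZ : 0 ≤ z.1 := by exact_mod_cast hz1nn
      have hz1leZ : z.1 ≤ r := by exact_mod_cast hz1le
      refine ⟨k, ⟨?_, ?_⟩, ?_, ?_⟩
      · nlinarith [hk, hz1nnZ]
      · have : r' * k ≤ r' * d := by rw [← hk]; nlinarith [hr', hz1leZ]
        exact le_of_mul_le_mul_left this hr'pos
      · rw [hk]; ring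
      · linarith [hka]
    · rintro ⟨k, ⟨hk0, hkd⟩, hz1, hz2⟩
      refine ⟨(k : ℚ) / d, ⟨?_, ?_⟩, ?_, ?_⟩
      · positivity
      · rw [div_le_one (by exact_mod_cast hd0)]; exact_mod_cast hkd
      · rw [← hz1]
        push_cast [hr']
        field_simp
        ring
      · rw [← hz2]
        push_cast
        have hcast : (d:ℚ) * a' = (a:ℚ) + 1 := by exact_mod_cast ha'.symm
        field_simp
        linear_combination (k:ℚ) * hcast
  -- count
  have hinj : Set.InjOn (fun k : ℤ => ((k * r', 1 - k * a') : ℤ × ℤ)) (Set.Icc (0:ℤ) d) := by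
    intro x _ y _ hxy
    have : x * r' = y * r' := congrArg Prod.fst hxy
    exact mul_right_cancel₀ hr'pos.ne' this
  have hcard : Set.ncard {z : ℤ × ℤ |
        ((z.1 : ℚ), (z.2 : ℚ)) ∈ segment ℚ ((0 : ℚ), (1 : ℚ)) ((r : ℚ), (-a : ℚ))}
      = (d + 1).toNat := by
    rw [hset, Set.ncard_image_of_injOn hinj, ← Finset.coe_Icc, Set.ncard_coe_finset,
      Int.card_Icc]
    simp
  have hwd : w = d := by
    rw [hcard] at hw
    have : ((d + 1).toNat : ℤ) = d + 1 := Int.toNat_of_nonneg (by omega)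
    omega
  -- now the local index
  have hm2 : m.2 = -l := by linarith [hl1]
  have hmr : m.1 * r = m.2 * (a + 1) := by linarith [hl2, hm2]
  have hmr' : m.1 * r' = m.2 * a' := by
    have : d * (m.1 * r') = d * (m.2 * a') := by rw [hr', ha'] at hmr; ring_nf; linarith [hmr]
    exact mul_left_cancel₀ hd0.ne' this
  have h1 : r' ∣ m.2 := cop'.dvd_of_dvd_mul_right ⟨m.1, by linarith [hmr']⟩
  have h2 : m.2 ∣ r' := hmprim.symm.dvd_of_dvd_mul_left (⟨a', hmr'⟩ : m.2 ∣ m.1 * r')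
  have hlr' : l = r' := by
    have h1' : r' ∣ l := by
      have : r' ∣ -l := hm2 ▸ h1
      exact (dvd_neg).mp this
    have h2' : l ∣ r' := by
      have : -l ∣ r' := hm2 ▸ h2
      exact (neg_dvd).mp this
    exact Int.dvd_antisymm hlpos.le hr'pos.le h2' h1'
  rw [hwd, hlr', hr']
end
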